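/- arXiv:2604.23558 — 5 statements merged into one kernel-verified Lean document; each statement's English description precedes it below -/
import Mathlib

section
/- Let q be a prime power, l ≥ 2, and let u₁, …, u_r ∈ GF(q^l) be such that 1, u₁, …, u_r are linearly independent over GF(q). For 1 ≤ s ≤ r, let g be the r × s matrix over GF(q^l) with entries g_{ij} = a_{ij} + b_j·u_i, where a_{ij}, b_j ∈ GF(q). For each 1 ≤ j ≤ s define v_j = (b_j, a_{1j}, a_{2j}, …, a_{rj}) ∈ GF(q)^{r+1}. Then the s columns of g are linearly independent over GF(q^l) if and only if the vectors v₁, …, v_s are linearly independent over GF(q). -/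
theorem stmt_0 (q l r s : ℕ) (hl : 2 ≤ l) (hs1 : 1 ≤ s) (hsr : s ≤ r)
    (K L : Type*) [Field K] [Fintype K] [Field L] [Algebra K L]
    (hq : Fintype.card K = q) (hrank : Module.finrank K L = l)
    (u : Fin r → L) (hu : LinearIndependent K (Fin.cons (1 : L) u))
    (a : Fin r → Fin s → K) (b : Fin s → K)
    (g : Matrix (Fin r) (Fin s) L)
    (hg : ∀ i j, g i j = algebraMap K L (a i j) + algebraMap K L (b j) * u i)
    (v : Fin s → Fin (r + 1) → K)
    (hv : ∀ j, v j = Fin.cons (b j) (fun i => a i j)) :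
    LinearIndependent L (fun j i => g i j) ↔ LinearIndependent K v := by
  have hainj : Function.Injective (algebraMap K L) := (algebraMap K L).injective
  constructor
  · intro hg_ind
    by_contra hvdep
    rw [Fintype.not_linearIndependent_iff] at hvdep
    obtain ⟨c, hc, j0, hj0⟩ := hvdep
    have hb0 : ∑ j, c j * b j = 0 := by
      have := congrFun hc (0 : Fin (r+1))
      simpa [hv, Finset.sum_apply] using this
    have ha0 : ∀ i, ∑ j, c j * a i j = 0 := by
      intro i
      have := congrFun hc (Fin.succ i)
      simpa [hv, Finset.sum_apply] using this
    have := Fintype.linearIndependent_iff.1 hg_ind (fun j => algebraMap K L (c j)) ?_ j0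
    · exact hj0 (hainj (by simpa using this))
    · funext i
      rw [Finset.sum_apply]
      have : ∑ j, algebraMap K L (c j) * g i j = 0 := by
        simp only [hg, mul_add, Finset.sum_add_distrib, ← mul_assoc, ← map_mul,
          ← Finset.sum_mul, ← map_sum, hb0, ha0, map_zero, zero_mul, add_zero]
      simpa [smul_eq_mul] using this
  · intro hvind
    rw [Fintype.linearIndependent_iff]
    intro x hx j
    -- per-coordinate equations
    have hxi : ∀ i, (∑ j, x j * algebraMap K L (a i j))
        + (∑ j, x j * algebraMap K L (b j)) * u i = 0 := by
      intro i
      have := congrFun hx i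
      simp only [Finset.sum_apply, Pi.smul_apply, smul_eq_mul, Pi.zero_apply] at this
      calc (∑ j, x j * algebraMap K L (a i j)) + (∑ j, x j * algebraMap K L (b j)) * u i
          = ∑ j, x j * g i j := by
            rw [Finset.sum_mul, ← Finset.sum_add_distrib]
            refine Finset.sum_congr rfl fun j _ => ?_
            rw [hg]; ring
        _ = 0 := this
    set lam : L := ∑ j, x j * algebraMap K L (b j) with hlam
    by_cases hl0 : lam = 0
    · -- all (r+1) coordinate equations hold over L; expand over a K-basis
      have hEq : ∀ t : Fin (r+1), ∑ j, (v j t) • x j = 0 := by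
        intro t
        refine Fin.cases ?_ ?_ t
        · have h0 : ∑ j, (v j (0 : Fin (r+1))) • x j = lam := by
            rw [hlam]
            refine Finset.sum_congr rfl fun j _ => ?_
            rw [hv, Fin.cons_zero, Algebra.smul_def, mul_comm]
          rw [h0, hl0]
        · intro i
          have h2 : ∑ j, x j * algebraMap K L (a i j) = 0 := by
            have h := hxi i
            rw [hl0] at h
            simpa using h
          rw [← h2]
          refine Finset.sum_congr rfl fun j _ => ?_
          rw [hv, Fin.cons_succ, Algebra.smul_def, mul_comm]
      -- expand x j over a K-basis of L
      have hfree : Module.Free K L := inferInstance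
      let B := Module.Free.chooseBasis K L
      have hrep : ∀ m, ∀ t : Fin (r+1), ∑ j, (v j t) * (B.repr (x j) m) = 0 := by
        intro m t
        have := congrArg (fun z => B.repr z m) (hEq t)
        simpa [map_sum, Finsupp.smul_apply, smul_eq_mul] using this
      have hc : ∀ m, ∀ j, B.repr (x j) m = 0 := by
        intro m
        exact Fintype.linearIndependent_iff.1 hvind (fun j => B.repr (x j) m)
          (by funext t; simpa [Finset.sum_apply, smul_eq_mul, mul_comm] using hrep m t)
      have : B.repr (x j) = 0 := Finsupp.ext fun m => hc m j
      have := B.repr.injective (by simpa using this)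
      simpa using this
    · -- lam ≠ 0 leads to a contradiction with dim span ≤ s ≤ r
      exfalso
      set V : Submodule K L := Submodule.span K (Set.range x) with hV
      have hlamV : lam ∈ V := by
        rw [hlam]
        refine Submodule.sum_mem _ fun j _ => ?_
        rw [mul_comm, ← Algebra.smul_def]
        exact Submodule.smul_mem _ _ (Submodule.subset_span (Set.mem_range_self j))
      have haV : ∀ i, lam * u i ∈ V := by
        intro i
        have h1 := hxi i
        have : lam * u i = -∑ j, x j * algebraMap K L (a i j) := by linear_combination h1
        rw [this]
        refine Submodule.neg_mem _ (Submodule.sum_mem _ fun j _ => ?_)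
        rw [mul_comm, ← Algebra.smul_def]
        exact Submodule.smul_mem _ _ (Submodule.subset_span (Set.mem_range_self j))
      -- the family lam • (cons 1 u) is K-linearly independent and lands in V
      have hmul : LinearIndependent K (fun t : Fin (r+1) => lam * ((Fin.cons (1:L) u : Fin (r+1) → L) t)) := by
        have : LinearMap.ker (LinearMap.mulLeft K lam) = ⊥ := by
          rw [LinearMap.ker_eq_bot]
          exact mul_right_injective₀ hl0
        exact hu.map' (LinearMap.mulLeft K lam) this
      have hmem : ∀ t : Fin (r+1), lam * ((Fin.cons (1:L) u : Fin (r+1) → L) t) ∈ V := by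
        intro t
        rcases Fin.eq_zero_or_eq_succ t with h | ⟨i, h⟩ <;> subst h
        · simpa using hlamV
        · simpa using haV i
      have : FiniteDimensional K V := FiniteDimensional.span_of_finite K (Set.finite_range x)
      have hcard : r + 1 ≤ Module.finrank K V := by
        have hspan : Submodule.span K (Set.range
            (fun t : Fin (r+1) => lam * ((Fin.cons (1:L) u : Fin (r+1) → L) t))) ≤ V := by
          rw [Submodule.span_le]
          rintro _ ⟨t, rfl⟩
          exact hmem t
        calc r + 1 = Module.finrank K (Submodule.span K (Set.range
              (fun t : Fin (r+1) => lam * ((Fin.cons (1:L) u : Fin (r+1) → L) t)))) := by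
              rw [finrank_span_eq_card hmul, Fintype.card_fin]
          _ ≤ Module.finrank K V := Submodule.finrank_mono hspan
      have hle : Module.finrank K V ≤ s := by
        have := finrank_range_le_card (R := K) x
        simpa [Set.finrank, hV] using this
      omega
end

section
/- Let q be a prime power and let 1, u₁, …, u_r ∈ GF(q^l) be linearly independent over GF(q). Then the r × r matrix g over GF(q^l) with entries g_{ij} = a_{ij} + b_j·u_i (where a_{ij}, b_j ∈ GF(q)) is invertible if and only if the r vectors v_j = (b_j, a_{1j}, …, a_{rj}) ∈ GF(q)^{r+1}, for 1 ≤ j ≤ r, are linearly independent over GF(q). -/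
/-!
Write `U z = (z_{i+1} + z_0 u_i)_i` for the `L`-linear map `L^{r+1} → L^r`; the `j`-th column of
`g` is `U v_j`, and the kernel of `U` is the line through `(1, -u)`. Hence `g` is invertible iff
the `v_j` are linearly independent over `L` (equivalently over `K`) and their `L`-span meets that
line only in `0`. The second condition always holds: the `r` vectors `v_j` of `K^{r+1}` are
annihilated by some nonzero `φ ∈ K^{r+1}`, and `φ` cannot annihilate `(1, -u)` because
`1, u_1, …, u_r` are linearly independent over `K`.
-/

open Matrix

section

variable {K L : Type*} [Field K] [Field L] [Algebra K L] {r : ℕ}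

def tailAddHeadSMul (u : Fin r → L) : (Fin (r + 1) → L) →ₗ[L] Fin r → L :=
  LinearMap.funLeft L L Fin.succ + (LinearMap.proj 0).smulRight u

@[simp]
theorem tailAddHeadSMul_apply (u : Fin r → L) (z : Fin (r + 1) → L) :
    tailAddHeadSMul u z = Fin.tail z + z 0 • u :=
  rfl

theorem eq_smul_cons_one_neg_of_tailAddHeadSMul_eq_zero {u : Fin r → L} {z : Fin (r + 1) → L}
    (hz : tailAddHeadSMul u z = 0) : z = z 0 • Fin.cons 1 (-u) := by
  refine funext (Fin.cases (by simp) fun i => ?_)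
  have hi := congrFun hz i
  simp only [tailAddHeadSMul_apply, Pi.add_apply, Fin.tail, Pi.smul_apply, smul_eq_mul,
    Pi.zero_apply] at hi
  simp only [Pi.smul_apply, Fin.cons_succ, Pi.neg_apply, smul_eq_mul]
  linear_combination hi

theorem dotProduct_cons_one_neg_ne_zero {u : Fin r → L}
    (hu : LinearIndependent K (Fin.cons (1 : L) u)) {φ : Fin (r + 1) → K} (hφ : φ ≠ 0) :
    (algebraMap K L ∘ φ) ⬝ᵥ Fin.cons 1 (-u) ≠ 0 := by
  intro h
  have hψ := Fintype.linearIndependent_iff.mp hu (Fin.cons (φ 0) (-Fin.tail φ)) <| by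
    simpa [Fin.sum_univ_succ, dotProduct, Algebra.smul_def, Fin.tail] using h
  refine hφ (funext (Fin.cases ?_ fun i => ?_))
  · simpa using hψ 0
  · simpa [Fin.tail] using hψ i.succ

theorem exists_ne_zero_forall_dotProduct_eq_zero {ι κ : Type*} [Fintype ι] [Fintype κ]
    (v : ι → κ → K) (h : Fintype.card ι < Fintype.card κ) :
    ∃ φ ≠ 0, ∀ j, v j ⬝ᵥ φ = 0 := by
  have hker : LinearMap.ker (Matrix.of v).mulVecLin ≠ ⊥ :=
    LinearMap.ker_ne_bot_of_finrank_lt (by simpa using h)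
  obtain ⟨φ, hφ, hne⟩ := (Submodule.ne_bot_iff _).mp hker
  exact ⟨φ, hne, fun j => congrFun hφ j⟩

theorem disjoint_span_ker_tailAddHeadSMul {u : Fin r → L}
    (hu : LinearIndependent K (Fin.cons (1 : L) u)) (v : Fin r → Fin (r + 1) → K) :
    Disjoint (Submodule.span L (Set.range fun j => algebraMap K L ∘ v j))
      (LinearMap.ker (tailAddHeadSMul u)) := by
  obtain ⟨φ, hφ, hφv⟩ := exists_ne_zero_forall_dotProduct_eq_zero v (by simp)
  rw [Submodule.disjoint_def]
  intro z hz hUz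
  have hφz : (algebraMap K L ∘ φ) ⬝ᵥ z = 0 := by
    obtain ⟨c, rfl⟩ := (Submodule.mem_span_range_iff_exists_fun L).mp hz
    simp_rw [dotProduct_sum, dotProduct_smul, dotProduct_comm (algebraMap K L ∘ φ),
      ← RingHom.map_dotProduct, hφv, map_zero, smul_zero, Finset.sum_const_zero]
  have hz0 : z 0 = 0 := by
    rw [eq_smul_cons_one_neg_of_tailAddHeadSMul_eq_zero hUz, dotProduct_smul, smul_eq_mul] at hφz
    exact (mul_eq_zero.mp hφz).resolve_right (dotProduct_cons_one_neg_ne_zero hu hφ)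
  rw [eq_smul_cons_one_neg_of_tailAddHeadSMul_eq_zero hUz, hz0, zero_smul]

theorem linearIndependent_tailAddHeadSMul_comp_iff {u : Fin r → L}
    (hu : LinearIndependent K (Fin.cons (1 : L) u)) (v : Fin r → Fin (r + 1) → K) :
    LinearIndependent L (fun j => tailAddHeadSMul u (algebraMap K L ∘ v j)) ↔
      LinearIndependent K v := by
  refine ⟨fun h => ?_, fun h => ?_⟩
  · exact linearIndependent_algebraMap_comp_iff.mp (h.of_comp (tailAddHeadSMul u))
  · have hw : LinearIndependent L fun j => algebraMap K L ∘ v j :=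
      linearIndependent_algebraMap_comp_iff.mpr h
    exact hw.map (disjoint_span_ker_tailAddHeadSMul hu v)

end

theorem stmt_1_general (r : ℕ)
    (K L : Type*) [Field K] [Field L] [Algebra K L]
    (u : Fin r → L) (hu : LinearIndependent K (Fin.cons (1 : L) u))
    (a : Fin r → Fin r → K) (b : Fin r → K)
    (g : Matrix (Fin r) (Fin r) L)
    (hg : ∀ i j, g i j = algebraMap K L (a i j) + algebraMap K L (b j) * u i)
    (v : Fin r → Fin (r + 1) → K)
    (hv : ∀ j, v j = Fin.cons (b j) (fun i => a i j)) :
    IsUnit g ↔ LinearIndependent K v := by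
  have hcol : g.col = fun j => tailAddHeadSMul u (algebraMap K L ∘ v j) := by
    ext j i
    simp [hg, hv, Fin.tail, Algebra.smul_def, mul_comm]
  rw [← linearIndependent_cols_iff_isUnit, hcol, linearIndependent_tailAddHeadSMul_comp_iff hu]

theorem stmt_1 (q l r : ℕ) (hl : 1 ≤ l)
    (K L : Type*) [Field K] [Fintype K] [Field L] [Algebra K L]
    (hq : Fintype.card K = q) (hrank : Module.finrank K L = l)
    (u : Fin r → L) (hu : LinearIndependent K (Fin.cons (1 : L) u))
    (a : Fin r → Fin r → K) (b : Fin r → K)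
    (g : Matrix (Fin r) (Fin r) L)
    (hg : ∀ i j, g i j = algebraMap K L (a i j) + algebraMap K L (b j) * u i)
    (v : Fin r → Fin (r + 1) → K)
    (hv : ∀ j, v j = Fin.cons (b j) (fun i => a i j)) :
    IsUnit g ↔ LinearIndependent K v :=
  stmt_1_general r K L u hu a b g hg v hv
end

section
/- Let q be a prime power, l ≥ 2, and let u₁,…,u_r ∈ GF(q^l) with 1,u₁,…,u_r GF(q)-linearly independent, r ≥ 1. Define G′ as the set of invertible r × r matrices D over GF(q^l) of the form D = (a_{ij} + b_j u_i)_{1≤i,j≤r} with a_{ij}, b_j ∈ GF(q) such that D maps the vector u = (u₁,…,u_r)ᵀ into the GF(q)-span of the standard basis vectors together with u (i.e., D·u ∈ GF(q)^r + GF(q)·u). Then there is a bijection between G′ and the stabilizer H_{⟨1,u₁,…,u_r⟩} = {λ ∈ GF(q^l)* : λ·⟨1,u₁,…,u_r⟩ = ⟨1,u₁,…,u_r⟩}. -/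
theorem stmt_8 (q l r : ℕ) (hl : 2 ≤ l) (hr : 1 ≤ r)
    (K L : Type*) [Field K] [Fintype K] [Field L] [Algebra K L]
    (hq : Fintype.card K = q) (hrank : Module.finrank K L = l)
    (u : Fin r → L) (hu : LinearIndependent K (Fin.cons (1 : L) u))
    (G' : Set (Matrix (Fin r) (Fin r) L))
    (hG' : G' = {D | IsUnit D ∧
      (∃ (a : Fin r → Fin r → K) (b : Fin r → K),
        ∀ i j, D i j = algebraMap K L (a i j) + algebraMap K L (b j) * u i) ∧
      (∃ (α : Fin r → K) (β : K),
        ∀ i, D.mulVec u i = algebraMap K L (α i) + algebraMap K L β * u i)}) :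
    Nonempty (G' ≃ {c : Lˣ //
      Submodule.map (LinearMap.mulLeft K (c : L))
          (Submodule.span K (insert (1 : L) (Set.range u))) =
        Submodule.span K (insert (1 : L) (Set.range u))}) := by
  classical
  have hfd : FiniteDimensional K L :=
    FiniteDimensional.of_finrank_pos (by rw [hrank]; omega)
  have hι : Function.Injective (algebraMap K L) := (algebraMap K L).injective
  set v : Fin (r + 1) → L := Fin.cons 1 u with hvdef
  set V : Submodule K L := Submodule.span K (insert (1 : L) (Set.range u)) with hVdef
  have hVv : V = Submodule.span K (Set.range v) := by
    rw [hVdef, hvdef, Fin.range_cons]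
  have hLI : ∀ g : Fin (r + 1) → K, ∑ i, g i • v i = 0 → ∀ i, g i = 0 :=
    Fintype.linearIndependent_iff.mp hu
  -- uniqueness of representations
  have hkey : ∀ (x x' : K) (g g' : Fin r → K),
      x • (1 : L) + ∑ j, g j • u j = x' • (1 : L) + ∑ j, g' j • u j → x = x' ∧ g = g' := by
    intro x x' g g' h
    have h0 : ∑ i, (Fin.cons (x - x') (g - g') : Fin (r + 1) → K) i • v i = 0 := by
      have e : ∑ i, (Fin.cons (x - x') (g - g') : Fin (r + 1) → K) i • v i
          = (x • (1 : L) + ∑ j, g j • u j) - (x' • (1 : L) + ∑ j, g' j • u j) := by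
        rw [Fin.sum_univ_succ]
        simp only [hvdef, Fin.cons_zero, Fin.cons_succ, Pi.sub_apply, sub_smul,
          Finset.sum_sub_distrib]
        abel
      rw [e, h, sub_self]
    have hz := hLI _ h0
    refine ⟨sub_eq_zero.mp (by simpa using hz 0), funext fun j => sub_eq_zero.mp ?_⟩
    simpa using hz j.succ
  have hsingle : ∀ (i : Fin r) (y : K), ∑ j, (Pi.single i y : Fin r → K) j • u j = y • u i := by
    intro i y
    rw [Finset.sum_eq_single i]
    · rw [Pi.single_eq_same]
    · intro b _ hb; rw [Pi.single_eq_of_ne hb, zero_smul]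
    · intro h; exact absurd (Finset.mem_univ i) h
  have hpair : ∀ (i : Fin r) (x y x' y' : K),
      algebraMap K L x + algebraMap K L y * u i
        = algebraMap K L x' + algebraMap K L y' * u i → x = x' ∧ y = y' := by
    intro i x y x' y' h
    have h2 : x • (1 : L) + ∑ j, (Pi.single i y : Fin r → K) j • u j
        = x' • (1 : L) + ∑ j, (Pi.single i y' : Fin r → K) j • u j := by
      rw [hsingle, hsingle]
      simpa only [Algebra.smul_def, mul_one] using h
    obtain ⟨hx, hg⟩ := hkey _ _ _ _ h2
    exact ⟨hx, by simpa using congrFun hg i⟩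
  have hmem : ∀ z : L, z ∈ V ↔ ∃ (x : K) (g : Fin r → K), z = x • (1 : L) + ∑ j, g j • u j := by
    intro z
    rw [hVv, Submodule.mem_span_range_iff_exists_fun]
    constructor
    · rintro ⟨g, hg⟩
      refine ⟨g 0, fun j => g j.succ, ?_⟩
      rw [← hg, Fin.sum_univ_succ]
      simp [hvdef]
    · rintro ⟨x, g, rfl⟩
      refine ⟨Fin.cons x g, ?_⟩
      rw [Fin.sum_univ_succ]
      simp [hvdef]
  -- stabilizer characterizations
  have hstabTo : ∀ c : L, Submodule.map (LinearMap.mulLeft K c) V = V →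
      c ∈ V ∧ ∀ i, c * u i ∈ V := by
    intro c hc
    have h1 : (1 : L) ∈ V := by rw [hVdef]; exact Submodule.subset_span (Set.mem_insert _ _)
    have hui : ∀ i, u i ∈ V := fun i => by
      rw [hVdef]; exact Submodule.subset_span (Set.mem_insert_of_mem _ ⟨i, rfl⟩)
    constructor
    · have := Submodule.mem_map_of_mem (f := LinearMap.mulLeft K c) h1
      rw [hc] at this
      simpa using this
    · intro i
      have := Submodule.mem_map_of_mem (f := LinearMap.mulLeft K c) (hui i)
      rw [hc] at this
      simpa using this
  have hstabOf : ∀ c : L, c ≠ 0 → c ∈ V → (∀ i, c * u i ∈ V) →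
      Submodule.map (LinearMap.mulLeft K c) V = V := by
    intro c hc0 hcV hcu
    have hle : Submodule.map (LinearMap.mulLeft K c) V ≤ V := by
      rw [Submodule.map_le_iff_le_comap]
      nth_rewrite 1 [hVdef]
      rw [Submodule.span_le]
      rintro z hz
      rcases Set.mem_insert_iff.mp hz with rfl | ⟨i, rfl⟩
      · simpa [Submodule.mem_comap] using hcV
      · simpa [Submodule.mem_comap] using hcu i
    let e : L ≃ₗ[K] L := LinearEquiv.ofLinear (LinearMap.mulLeft K c) (LinearMap.mulLeft K c⁻¹)
      (by ext x; simp [LinearMap.mulLeft_apply, ← mul_assoc, mul_inv_cancel₀ hc0])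
      (by ext x; simp [LinearMap.mulLeft_apply, ← mul_assoc, inv_mul_cancel₀ hc0])
    have hfr : Module.finrank K (Submodule.map (LinearMap.mulLeft K c) V)
        = Module.finrank K V := LinearEquiv.finrank_map_eq e V
    exact Submodule.eq_of_le_of_finrank_le hle hfr.ge
  -- coordinates
  have hexists : ∀ z : L, z ∈ V →
      ∃ (x : K) (g : Fin r → K), z = x • (1 : L) + ∑ j, g j • u j :=
    fun z hz => (hmem z).mp hz
  choose co cv hco using hexists
  have hcoeq : ∀ (z : L) (hz : z ∈ V) (x : K) (g : Fin r → K),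
      z = x • (1 : L) + ∑ j, g j • u j → co z hz = x ∧ cv z hz = g :=
    fun z hz x g h => hkey _ _ _ _ ((hco z hz).symm.trans h)
  -- the stabilizer type
  let St := {c : Lˣ // Submodule.map (LinearMap.mulLeft K (c : L)) V = V}
  have hcV : ∀ c : St, ((c.1 : L)) ∈ V := fun c => (hstabTo _ c.2).1
  have hcuV : ∀ c : St, ∀ i, (c.1 : L) * u i ∈ V := fun c => (hstabTo _ c.2).2
  have hsumb : ∀ c : St,
      ∑ j, algebraMap K L (cv (c.1 : L) (hcV c) j) * u j
        = (c.1 : L) - algebraMap K L (co (c.1 : L) (hcV c)) := by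
    intro c
    have h := hco (c.1 : L) (hcV c)
    simp only [Algebra.smul_def, mul_one] at h
    linear_combination -h
  have hsuma : ∀ (c : St) (i : Fin r),
      ∑ j, algebraMap K L (cv ((c.1 : L) * u i) (hcuV c i) j) * u j
        = (c.1 : L) * u i - algebraMap K L (co ((c.1 : L) * u i) (hcuV c i)) := by
    intro c i
    have h := hco ((c.1 : L) * u i) (hcuV c i)
    simp only [Algebra.smul_def, mul_one] at h
    linear_combination -h
  -- construction of the matrix attached to a stabilizer element
  have hmk : ∀ c : St, ∃ D : Matrix (Fin r) (Fin r) L, D ∈ G' ∧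
      (∀ i j, D i j = algebraMap K L (-(cv ((c.1 : L) * u i) (hcuV c i) j))
        + algebraMap K L (cv (c.1 : L) (hcV c) j) * u i) ∧
      (∀ i, D.mulVec u i = algebraMap K L (co ((c.1 : L) * u i) (hcuV c i))
        + algebraMap K L (-(co (c.1 : L) (hcV c))) * u i) := by
    intro c
    have hsb := hsumb c
    have hsa := hsuma c
    have hc0 : (c.1 : L) ≠ 0 := c.1.ne_zero
    set M : Matrix (Fin r) (Fin r) L := Matrix.of fun i j =>
      algebraMap K L (-(cv ((c.1 : L) * u i) (hcuV c i) j))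
        + algebraMap K L (cv (c.1 : L) (hcV c) j) * u i with hM
    have hMu : ∀ i, M.mulVec u i = algebraMap K L (co ((c.1 : L) * u i) (hcuV c i))
        + algebraMap K L (-(co (c.1 : L) (hcV c))) * u i := by
      intro i
      have h1 : M.mulVec u i = ∑ j, (algebraMap K L (-(cv ((c.1 : L) * u i) (hcuV c i) j))
          + algebraMap K L (cv (c.1 : L) (hcV c) j) * u i) * u j := by
        simp [hM, Matrix.mulVec, dotProduct]
      have hsplit : ∀ j, (algebraMap K L (-(cv ((c.1 : L) * u i) (hcuV c i) j))
          + algebraMap K L (cv (c.1 : L) (hcV c) j) * u i) * u j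
          = -(algebraMap K L (cv ((c.1 : L) * u i) (hcuV c i) j) * u j)
            + u i * (algebraMap K L (cv (c.1 : L) (hcV c) j) * u j) := by
        intro j; rw [map_neg]; ring
      rw [h1, Finset.sum_congr rfl fun j _ => hsplit j, Finset.sum_add_distrib,
        Finset.sum_neg_distrib, ← Finset.mul_sum, hsa i, hsb, map_neg]
      ring
    -- the (r+1)×(r+1) auxiliary matrix over K
    set A : Matrix (Fin (r + 1)) (Fin (r + 1)) K := Matrix.of (Fin.cons
        (Fin.cons (co (c.1 : L) (hcV c)) (cv (c.1 : L) (hcV c)))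
        (fun i => Fin.cons (co ((c.1 : L) * u i) (hcuV c i)) (cv ((c.1 : L) * u i) (hcuV c i))))
      with hA
    have hArow : ∀ i, ∑ k, algebraMap K L (A i k) * v k = (c.1 : L) * v i := by
      intro i
      induction i using Fin.cases with
      | zero =>
        rw [Fin.sum_univ_succ]
        simp only [hA, hvdef, Matrix.of_apply, Fin.cons_zero, Fin.cons_succ, mul_one]
        rw [hsb]
        ring
      | succ i =>
        rw [Fin.sum_univ_succ]
        simp only [hA, hvdef, Matrix.of_apply, Fin.cons_zero, Fin.cons_succ, mul_one]
        rw [hsa i]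
        ring
    have hdetA : A.det ≠ 0 := by
      intro hdet
      obtain ⟨x, hx0, hxA⟩ := Matrix.exists_vecMul_eq_zero_iff.mpr hdet
      have hz0 : (c.1 : L) * ∑ i, x i • v i = 0 := by
        rw [Finset.mul_sum]
        calc ∑ i, (c.1 : L) * (x i • v i) = ∑ i, x i • ((c.1 : L) * v i) :=
              Finset.sum_congr rfl fun i _ => mul_smul_comm _ _ _
          _ = ∑ i, x i • (∑ k, algebraMap K L (A i k) * v k) :=
              Finset.sum_congr rfl fun i _ => by rw [hArow i]
          _ = ∑ i, ∑ k, (x i * A i k) • v k := by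
              refine Finset.sum_congr rfl fun i _ => ?_
              rw [Finset.smul_sum]
              exact Finset.sum_congr rfl fun k _ => by
                rw [← Algebra.smul_def, smul_smul]
          _ = ∑ k, (∑ i, x i * A i k) • v k := by
              rw [Finset.sum_comm]
              exact Finset.sum_congr rfl fun k _ => (Finset.sum_smul).symm
          _ = 0 := by
              refine Finset.sum_eq_zero fun k _ => ?_
              have hk := congrFun hxA k
              simp only [Matrix.vecMul, dotProduct, Pi.zero_apply] at hk
              rw [hk, zero_smul]
      have hz : ∑ i, x i • v i = 0 := by
        rcases mul_eq_zero.mp hz0 with h | h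
        · exact absurd h hc0
        · exact h
      exact hx0 (funext fun i => hLI _ hz i)
    have hdetALne : (A.map (algebraMap K L)).det ≠ 0 := fun h =>
      hdetA (hι (by rw [RingHom.map_det, RingHom.mapMatrix_apply, h, map_zero]))
    have hMinj : ∀ x : Fin r → L, M.mulVec x = 0 → x = 0 := by
      intro x hx
      have hxi : ∀ i, ∑ j, algebraMap K L (cv ((c.1 : L) * u i) (hcuV c i) j) * x j
          = u i * ∑ j, algebraMap K L (cv (c.1 : L) (hcV c) j) * x j := by
        intro i
        have h0 : M.mulVec x i = 0 := congrFun hx i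
        have h1 : M.mulVec x i = ∑ j, (algebraMap K L (-(cv ((c.1 : L) * u i) (hcuV c i) j))
            + algebraMap K L (cv (c.1 : L) (hcV c) j) * u i) * x j := by
          simp [hM, Matrix.mulVec, dotProduct]
        rw [h1] at h0
        have hsplit : ∀ j, (algebraMap K L (-(cv ((c.1 : L) * u i) (hcuV c i) j))
            + algebraMap K L (cv (c.1 : L) (hcV c) j) * u i) * x j
            = -(algebraMap K L (cv ((c.1 : L) * u i) (hcuV c i) j) * x j)
              + u i * (algebraMap K L (cv (c.1 : L) (hcV c) j) * x j) := by
          intro j; rw [map_neg]; ring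
        rw [Finset.sum_congr rfl fun j _ => hsplit j, Finset.sum_add_distrib,
          Finset.sum_neg_distrib, ← Finset.mul_sum] at h0
        linear_combination -h0
      set t : L := ∑ j, algebraMap K L (cv (c.1 : L) (hcV c) j) * x j with htdef
      set s : L := -t / (c.1 : L) with hsdef
      have hsc : s * (c.1 : L) = -t := by
        rw [hsdef]; field_simp
      set z : Fin (r + 1) → L := Fin.cons s (fun j => x j + s * u j) with hzdef
      have hAz : (A.map (algebraMap K L)).mulVec z = 0 := by
        funext i
        have h1 : (A.map (algebraMap K L)).mulVec z i = ∑ k, algebraMap K L (A i k) * z k := by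
          simp [Matrix.mulVec, dotProduct, Matrix.map_apply]
        have h2 : ∑ k, algebraMap K L (A i k) * z k
            = s * ((c.1 : L) * v i) + ∑ j, algebraMap K L (A i j.succ) * x j := by
          rw [← hArow i, Fin.sum_univ_succ (f := fun k => algebraMap K L (A i k) * z k),
            Fin.sum_univ_succ (f := fun k => algebraMap K L (A i k) * v k)]
          simp only [hzdef, hvdef, Fin.cons_zero, Fin.cons_succ, mul_one]
          have e : ∀ j, algebraMap K L (A i j.succ) * (x j + s * u j)
              = algebraMap K L (A i j.succ) * x j + s * (algebraMap K L (A i j.succ) * u j) :=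
            fun j => by ring
          rw [Finset.sum_congr rfl fun j _ => e j, Finset.sum_add_distrib, ← Finset.mul_sum]
          ring
        rw [Pi.zero_apply, h1, h2]
        induction i using Fin.cases with
        | zero =>
          have e0 : ∑ j, algebraMap K L (A (0 : Fin (r + 1)) j.succ) * x j = t := by
            rw [htdef]
            exact Finset.sum_congr rfl fun j _ => by
              simp [hA, Fin.cons_zero, Fin.cons_succ]
          rw [e0]
          simp only [hvdef, Fin.cons_zero, mul_one]
          linear_combination hsc
        | succ i =>
          have e1 : ∑ j, algebraMap K L (A (Fin.succ i) j.succ) * x j = u i * t := by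
            calc ∑ j, algebraMap K L (A (Fin.succ i) j.succ) * x j
                = ∑ j, algebraMap K L (cv ((c.1 : L) * u i) (hcuV c i) j) * x j :=
                  Finset.sum_congr rfl fun j _ => by simp [hA, Fin.cons_succ]
              _ = u i * t := hxi i
          rw [e1]
          simp only [hvdef, Fin.cons_succ]
          linear_combination u i * hsc
      have hz0 : z = 0 := by
        by_contra hne
        exact hdetALne (Matrix.exists_mulVec_eq_zero_iff.mp ⟨z, hne, hAz⟩)
      have hs0 : s = 0 := by
        have := congrFun hz0 0
        simpa [hzdef, Fin.cons_zero] using this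
      funext j
      have hj := congrFun hz0 j.succ
      simp only [hzdef, Fin.cons_succ, Pi.zero_apply, hs0, zero_mul, add_zero] at hj
      simpa using hj
    have hMdet : M.det ≠ 0 := by
      intro h
      obtain ⟨x, hx0, hxM⟩ := Matrix.exists_mulVec_eq_zero_iff.mpr h
      exact hx0 (hMinj x hxM)
    have hMunit : IsUnit M := (Matrix.isUnit_iff_isUnit_det M).mpr (isUnit_iff_ne_zero.mpr hMdet)
    refine ⟨M, ?_, fun i j => rfl, hMu⟩
    rw [hG']
    exact ⟨hMunit,
      ⟨fun i j => -(cv ((c.1 : L) * u i) (hcuV c i) j), cv (c.1 : L) (hcV c),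
        fun i j => rfl⟩,
      ⟨fun i => co ((c.1 : L) * u i) (hcuV c i), -(co (c.1 : L) (hcV c)), hMu⟩⟩
  choose Dmap hDmemG hDent hDu using hmk
  -- injectivity
  have hinj : Function.Injective (fun c : St => (⟨Dmap c, hDmemG c⟩ : G')) := by
    intro c c' h
    have hDeq : Dmap c = Dmap c' := congrArg Subtype.val h
    have hent : ∀ i j,
        algebraMap K L (-(cv ((c.1 : L) * u i) (hcuV c i) j))
          + algebraMap K L (cv (c.1 : L) (hcV c) j) * u i
        = algebraMap K L (-(cv ((c'.1 : L) * u i) (hcuV c' i) j))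
          + algebraMap K L (cv (c'.1 : L) (hcV c') j) * u i := by
      intro i j
      rw [← hDent c i j, ← hDent c' i j, hDeq]
    have hbeq : ∀ j, cv (c.1 : L) (hcV c) j = cv (c'.1 : L) (hcV c') j :=
      fun j => (hpair ⟨0, hr⟩ _ _ _ _ (hent ⟨0, hr⟩ j)).2
    have hmveq :
        algebraMap K L (co ((c.1 : L) * u ⟨0, hr⟩) (hcuV c ⟨0, hr⟩))
          + algebraMap K L (-(co (c.1 : L) (hcV c))) * u ⟨0, hr⟩
        = algebraMap K L (co ((c'.1 : L) * u ⟨0, hr⟩) (hcuV c' ⟨0, hr⟩))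
          + algebraMap K L (-(co (c'.1 : L) (hcV c'))) * u ⟨0, hr⟩ := by
      rw [← hDu c ⟨0, hr⟩, ← hDu c' ⟨0, hr⟩, hDeq]
    have hβeq : co (c.1 : L) (hcV c) = co (c'.1 : L) (hcV c') :=
      neg_injective (hpair ⟨0, hr⟩ _ _ _ _ hmveq).2
    have hval : (c.1 : L) = (c'.1 : L) := by
      calc (c.1 : L) = co (c.1 : L) (hcV c) • (1 : L) + ∑ j, cv (c.1 : L) (hcV c) j • u j :=
            hco _ _
        _ = co (c'.1 : L) (hcV c') • (1 : L) + ∑ j, cv (c'.1 : L) (hcV c') j • u j := by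
            rw [hβeq]
            congr 1
            exact Finset.sum_congr rfl fun j _ => by rw [hbeq j]
        _ = (c'.1 : L) := (hco _ _).symm
    exact Subtype.ext (Units.ext hval)
  -- surjectivity
  have hsurj : Function.Surjective (fun c : St => (⟨Dmap c, hDmemG c⟩ : G')) := by
    intro D'
    have hD : D'.1 ∈ {D : Matrix (Fin r) (Fin r) L | IsUnit D ∧
        (∃ (a : Fin r → Fin r → K) (b : Fin r → K),
          ∀ i j, D i j = algebraMap K L (a i j) + algebraMap K L (b j) * u i) ∧
        (∃ (α : Fin r → K) (β : K),
          ∀ i, D.mulVec u i = algebraMap K L (α i) + algebraMap K L β * u i)} := by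
      rw [← hG']; exact D'.2
    obtain ⟨hUnit, ⟨a, b, hab⟩, ⟨α, β, hαβ⟩⟩ := hD
    set cval : L := ∑ j, algebraMap K L (b j) * u j - algebraMap K L β with hcval
    have hDu' : ∀ i, D'.1.mulVec u i
        = ∑ j, algebraMap K L (a i j) * u j
          + u i * ∑ j, algebraMap K L (b j) * u j := by
      intro i
      have h1 : D'.1.mulVec u i = ∑ j, (algebraMap K L (a i j)
          + algebraMap K L (b j) * u i) * u j := by
        simp only [Matrix.mulVec, dotProduct]
        exact Finset.sum_congr rfl fun j _ => by rw [hab i j]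
      rw [h1]
      have hsplit : ∀ j, (algebraMap K L (a i j) + algebraMap K L (b j) * u i) * u j
          = algebraMap K L (a i j) * u j + u i * (algebraMap K L (b j) * u j) :=
        fun j => by ring
      rw [Finset.sum_congr rfl fun j _ => hsplit j, Finset.sum_add_distrib, ← Finset.mul_sum]
    have hcu : ∀ i, cval * u i = algebraMap K L (α i) + ∑ j, (-(a i j)) • u j := by
      intro i
      have h1 := hαβ i
      rw [hDu' i] at h1
      have e : ∀ j, (-(a i j)) • u j = -(algebraMap K L (a i j) * u j) := fun j => by
        rw [Algebra.smul_def, map_neg, neg_mul]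
      rw [Finset.sum_congr rfl fun j _ => e j, Finset.sum_neg_distrib, hcval]
      linear_combination h1
    have hc0 : cval ≠ 0 := by
      intro h0
      have e0 : (-β) • (1 : L) + ∑ j, b j • u j = (0 : K) • (1 : L) + ∑ j, (0 : K) • u j := by
        simp only [Algebra.smul_def, mul_one, map_neg, map_zero, zero_mul,
          Finset.sum_const_zero, add_zero]
        linear_combination h0 - hcval
      obtain ⟨hβ0, hb0⟩ := hkey _ _ _ _ e0
      have hDz : D'.1 = 0 := by
        ext i j
        have hai : α i • (1 : L) + ∑ j, (-(a i j)) • u j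
            = (0 : K) • (1 : L) + ∑ j, (0 : K) • u j := by
          have hthis := hcu i
          rw [h0, zero_mul] at hthis
          rw [Algebra.smul_def, mul_one]
          simp only [zero_smul, Finset.sum_const_zero, add_zero]
          exact hthis.symm
        obtain ⟨hα0, ha0⟩ := hkey _ _ _ _ hai
        have haij : a i j = 0 := by
          have := congrFun ha0 j
          simpa using this
        have hbj : b j = 0 := congrFun hb0 j
        rw [hab i j, haij, hbj]
        simp
      rw [hDz, Matrix.isUnit_iff_isUnit_det, @Matrix.det_zero (Fin r) _ _ _ _ ⟨⟨0, hr⟩⟩] at hUnit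
      exact not_isUnit_zero hUnit
    have hcmem : cval ∈ V := by
      refine (hmem _).mpr ⟨-β, b, ?_⟩
      rw [hcval]
      simp only [Algebra.smul_def, mul_one, map_neg]
      ring
    have hcumem : ∀ i, cval * u i ∈ V := by
      intro i
      refine (hmem _).mpr ⟨α i, fun j => -(a i j), ?_⟩
      rw [hcu i, Algebra.smul_def, mul_one]
    have hstab : Submodule.map (LinearMap.mulLeft K ((Units.mk0 cval hc0 : Lˣ) : L)) V = V :=
      hstabOf cval hc0 hcmem hcumem
    refine ⟨⟨Units.mk0 cval hc0, hstab⟩, Subtype.ext ?_⟩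
    have e_c : (((⟨Units.mk0 cval hc0, hstab⟩ : St).1 : Lˣ) : L)
        = (-β) • (1 : L) + ∑ j, b j • u j := by
      show cval = _
      rw [hcval]
      simp only [Algebra.smul_def, mul_one, map_neg]
      ring
    obtain ⟨hco_c, hcv_c⟩ := hcoeq _ (hcV ⟨Units.mk0 cval hc0, hstab⟩) (-β) b e_c
    ext i j
    have e_cu : (((⟨Units.mk0 cval hc0, hstab⟩ : St).1 : Lˣ) : L) * u i
        = (α i) • (1 : L) + ∑ j, -(a i j) • u j := by
      show cval * u i = _
      rw [hcu i, Algebra.smul_def, mul_one]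
    obtain ⟨hco_cu, hcv_cu⟩ :=
      hcoeq _ (hcuV ⟨Units.mk0 cval hc0, hstab⟩ i) (α i) (fun j => -(a i j)) e_cu
    show Dmap _ i j = D'.1 i j
    rw [hDent _ i j, hab i j, congrFun hcv_cu j, congrFun hcv_c j, neg_neg]
  exact ⟨(Equiv.ofBijective _ ⟨hinj, hsurj⟩).symm⟩
end

section
/- Let (V, 𝔅) be a 2-(v, K, λ)_q design (q-analog of a pairwise balanced design). Suppose that for each u ∈ K there exists a 2-(u, k, μ)_q design. Then there exists a 2-(v, k, λμ)_q design on V, obtained by replacing each block B ∈ 𝔅 (of dimension u) by the block multiset of a 2-(u, k, μ)_q design constructed on B. -/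
open scoped Classical

lemma sum_ite_aux {β : Type*} (p : β → Prop) [DecidablePred p] (mu : ℕ)
    (s : Multiset β) :
    (s.map (fun b => if p b then mu else 0)).sum = mu * s.countP p := by
  induction s using Multiset.induction with
  | empty => simp
  | cons a s ih =>
    simp only [Multiset.map_cons, Multiset.sum_cons, Multiset.countP_cons, ih]
    by_cases h : p a <;> simp [h, Nat.mul_add, Nat.add_comm]

lemma countP_bind_aux {α β : Type*} (p : α → Prop) [DecidablePred p]
    (s : Multiset β) (f : β → Multiset α) :
    (s.bind f).countP p = (s.map (fun b => (f b).countP p)).sum := by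
  induction s using Multiset.induction with
  | empty => simp
  | cons a s ih => simp [Multiset.countP_add, ih]

open scoped Classical in
theorem stmt_11 (q v k lam mu : ℕ)
    (K : Type*) [Field K] [Fintype K] (hq : Fintype.card K = q)
    (V : Type*) [AddCommGroup V] [Module K V] [FiniteDimensional K V]
    (hv : Module.finrank K V = v)
    (Ks : Finset ℕ)
    (B : Multiset (Submodule K V))
    (hdim : ∀ b ∈ B, Module.finrank K ↥b ∈ Ks)
    (hdes : ∀ T : Submodule K V, Module.finrank K ↥T = 2 →
      Multiset.countP (fun b => T ≤ b) B = lam)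
    (hsub : ∀ b : Submodule K V, Module.finrank K ↥b ∈ Ks →
      ∃ D : Multiset (Submodule K V),
        (∀ C ∈ D, C ≤ b ∧ Module.finrank K ↥C = k) ∧
        (∀ T : Submodule K V, T ≤ b → Module.finrank K ↥T = 2 →
          Multiset.countP (fun C => T ≤ C) D = mu)) :
    ∃ C : Multiset (Submodule K V),
      (∀ c ∈ C, Module.finrank K ↥c = k) ∧
      (∀ T : Submodule K V, Module.finrank K ↥T = 2 →
        Multiset.countP (fun c => T ≤ c) C = lam * mu) := by
  set f : Submodule K V → Multiset (Submodule K V) := fun b =>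
    if h : Module.finrank K ↥b ∈ Ks then (hsub b h).choose else 0 with hf
  have hf1 : ∀ b : Submodule K V, Module.finrank K ↥b ∈ Ks →
      ∀ C ∈ f b, C ≤ b ∧ Module.finrank K ↥C = k := by
    intro b hb C hC
    rw [hf] at hC; simp only [dif_pos hb] at hC
    exact (hsub b hb).choose_spec.1 C hC
  have hf2 : ∀ b : Submodule K V, Module.finrank K ↥b ∈ Ks →
      ∀ T : Submodule K V, T ≤ b → Module.finrank K ↥T = 2 →
      Multiset.countP (fun C => T ≤ C) (f b) = mu := by
    intro b hb T hTb hT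
    rw [hf]; simp only [dif_pos hb]
    exact (hsub b hb).choose_spec.2 T hTb hT
  refine ⟨B.bind f, ?_, ?_⟩
  · intro c hc
    obtain ⟨b, hb, hcb⟩ := Multiset.mem_bind.mp hc
    exact (hf1 b (hdim b hb) c hcb).2
  · intro T hT
    rw [countP_bind_aux]
    have key : ∀ b ∈ B, (f b).countP (fun C => T ≤ C) =
        if T ≤ b then mu else 0 := by
      intro b hb
      by_cases hTb : T ≤ b
      · rw [if_pos hTb]; exact hf2 b (hdim b hb) T hTb hT
      · rw [if_neg hTb]
        rw [Multiset.countP_eq_zero]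
        intro C hC hTC
        exact hTb (le_trans hTC (hf1 b (hdim b hb) C hC).1)
    rw [Multiset.map_congr rfl key]
    rw [sum_ite_aux (fun b => T ≤ b) mu B, hdes T hT, Nat.mul_comm]
end

section
/- Suppose (V, 𝒢, 𝔅) is a (v, m, k, λ)_q group divisible design over GF(q), and (Z, 𝒟) is a 2-(m+n, k, q^{n(k−2)}λ)_q design such that Z contains an n-dimensional subspace U for which 𝒟_U = {B ∈ 𝒟 : B ⊆ U} is a 2-(n, k, q^{n(k−2)}λ)_q design on U. Then there exists a 2-(v+n, k, q^{n(k−2)}λ)_q design. -/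
/-!
Build the design on `V × N` with `N = K ^ n`. For every group `G` choose an embedding
`φ_G : Z → V × N` with image `G × N` mapping `U` onto `0 × N`. The blocks are the images under
every `φ_G` of the blocks of `𝒟` not contained in `U`, one copy of `𝒟_U` inside `0 × N`, and, for
every block `B` of the GDD and every linear map `f : B → N`, the graph of `f`.

Let `T` be a 2-subspace of `V × N` with projection `T'` to `V`. If `T' = 0`, only the copy of
`𝒟_U` covers `T`. If `T' ≠ 0` lies in a group `G`, only the copy in `G × N` covers `T`; it does so
`q^{n(k-2)}λ` times, because removing the blocks inside `U` removes precisely the coverings of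
2-subspaces of `U`. Otherwise `T'` is 2-dimensional, lies in `λ` blocks `B`, and `T` lies in the
graph of exactly `q^{n(k-2)}` linear maps `B → N`, those extending the map `T' → N` whose graph
is `T`.
-/

open Module Submodule Function LinearMap
open scoped Classical

section LinearAlgebra

variable {K M M' : Type*} [Field K] [AddCommGroup M] [Module K M] [AddCommGroup M'] [Module K M']

theorem Submodule.finrank_map_of_disjoint_ker {f : M →ₗ[K] M'} {p : Submodule K M}
    (h : Disjoint p (ker f)) : finrank K (p.map f) = finrank K p := by
  rw [← range_domRestrict]
  exact finrank_range_of_inj (injective_domRestrict_iff.mpr h)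

theorem Submodule.finrank_map_of_injective {f : M →ₗ[K] M'} (hf : Injective f)
    (p : Submodule K M) : finrank K (p.map f) = finrank K p :=
  finrank_map_of_disjoint_ker (by simp [ker_eq_bot.mpr hf])

theorem Submodule.finrank_comap_of_le_range {f : M →ₗ[K] M'} (hf : Injective f)
    {T : Submodule K M'} (hT : T ≤ range f) : finrank K (T.comap f) = finrank K T := by
  rw [← finrank_map_of_injective hf, map_comap_eq_self hT]

theorem Submodule.le_map_iff_comap_le {f : M →ₗ[K] M'} (hf : Injective f)
    {T : Submodule K M'} (hT : T ≤ range f) (p : Submodule K M) :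
    T ≤ p.map f ↔ T.comap f ≤ p := by
  conv_lhs => rw [← map_comap_eq_self hT]
  exact map_le_map_iff_of_injective hf _ _

theorem LinearMap.natCard_fiber_of_surjective [FiniteDimensional K M] {R : M →ₗ[K] M'}
    (hR : Surjective R) (y : M') :
    Nat.card {x // R x = y} = Nat.card K ^ (finrank K M - finrank K M') := by
  obtain ⟨x₀, rfl⟩ := hR y
  have e : {x // R x = R x₀} ≃ ker R :=
    (Equiv.subRight x₀).subtypeEquiv fun x => by simp [sub_eq_zero]
  have hrank := finrank_range_add_finrank_ker R
  rw [range_eq_top.mpr hR, finrank_top] at hrank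
  rw [Nat.card_congr e, natCard_eq_pow_finrank (K := K)]
  congr 1
  omega

theorem LinearMap.natCard_comp_eq_of_injective {P N : Type*} [AddCommGroup P] [Module K P]
    [AddCommGroup N] [Module K N] [FiniteDimensional K P] [FiniteDimensional K M]
    [FiniteDimensional K N] {ι : P →ₗ[K] M} (hι : Injective ι) (g : P →ₗ[K] N) :
    Nat.card {f : M →ₗ[K] N // f ∘ₗ ι = g} =
      Nat.card K ^ ((finrank K M - finrank K P) * finrank K N) := by
  have hsurj : Surjective (lcomp K N ι) := fun h => by
    obtain ⟨r, hr⟩ := ι.exists_leftInverse_of_injective (ker_eq_bot.mpr hι)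
    exact ⟨h ∘ₗ r, by ext; simp [← comp_apply (f := r), hr]⟩
  rw [Nat.sub_mul, ← finrank_linearMap, ← finrank_linearMap]
  exact natCard_fiber_of_surjective hsurj g

end LinearAlgebra

section Graph

variable {K V N : Type*} [Field K] [AddCommGroup V] [Module K V] [AddCommGroup N] [Module K N]

def graphOn (B : Submodule K V) (f : B →ₗ[K] N) : Submodule K (V × N) :=
  range (B.subtype.prod f)

theorem finrank_graphOn (B : Submodule K V) (f : B →ₗ[K] N) :
    finrank K (graphOn B f) = finrank K B :=
  finrank_range_of_inj fun _ _ h => Subtype.ext (congrArg Prod.fst h)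

theorem map_fst_graphOn (B : Submodule K V) (f : B →ₗ[K] N) :
    (graphOn B f).map (fst K V N) = B := by
  rw [graphOn, ← range_comp, fst_prod, range_subtype]

theorem disjoint_graphOn_ker_fst (B : Submodule K V) (f : B →ₗ[K] N) :
    Disjoint (graphOn B f) (ker (fst K V N)) := by
  rw [disjoint_ker]
  rintro _ ⟨b, rfl⟩ hb
  obtain rfl : b = 0 := Subtype.ext hb
  simp

theorem le_graphOn_iff {T : Submodule K (V × N)} {B : Submodule K V}
    (hTB : T.map (fst K V N) ≤ B) (f : B →ₗ[K] N) :
    T ≤ graphOn B f ↔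
      f ∘ₗ (fst K V N ∘ₗ T.subtype).codRestrict B (fun t => hTB (mem_map_of_mem t.2)) =
        snd K V N ∘ₗ T.subtype := by
  constructor
  · intro h
    ext t
    obtain ⟨b, hb⟩ := h t.2
    obtain rfl : b = ⟨(t : V × N).1, hTB (mem_map_of_mem t.2)⟩ :=
      Subtype.ext (congrArg Prod.fst hb)
    exact congrArg Prod.snd hb
  · intro h t ht
    exact ⟨⟨t.1, hTB (mem_map_of_mem ht)⟩, Prod.ext rfl (LinearMap.congr_fun h ⟨t, ht⟩)⟩

theorem natCard_le_graphOn [FiniteDimensional K V] [FiniteDimensional K N]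
    (T : Submodule K (V × N)) (B : Submodule K V) :
    Nat.card {f : B →ₗ[K] N // T ≤ graphOn B f} =
      if T.map (fst K V N) ≤ B ∧ Disjoint T (ker (fst K V N)) then
        Nat.card K ^ ((finrank K B - finrank K T) * finrank K N)
      else 0 := by
  split_ifs with h
  · obtain ⟨hTB, hT⟩ := h
    rw [Nat.card_congr (Equiv.subtypeEquivRight (le_graphOn_iff hTB))]
    refine natCard_comp_eq_of_injective (fun x y hxy => ?_) _
    exact injective_domRestrict_iff.mpr hT (congrArg Subtype.val hxy)
  · rw [Nat.card_eq_zero]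
    refine Or.inl ⟨fun ⟨f, hf⟩ => h ⟨?_, ?_⟩⟩
    · exact (map_mono hf).trans (map_fst_graphOn B f).le
    · exact (disjoint_graphOn_ker_fst B f).mono_left hf

end Graph

theorem Multiset.countP_bind_eq_mul {α β : Type*} {s : Multiset α} {g : α → Multiset β}
    {p : β → Prop} {r : α → Prop} [DecidablePred p] [DecidablePred r] {c : ℕ}
    (h : ∀ a ∈ s, (g a).countP p = if r a then c else 0) :
    (s.bind g).countP p = c * s.countP r := by
  induction s using Multiset.induction_on with
  | empty => simp
  | cons a s ih =>
    rw [cons_bind, countP_add, h a (mem_cons_self a s),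
      ih fun b hb => h b (mem_cons_of_mem hb), countP_cons]
    split_ifs <;> ring

theorem Finset.countP_univ_val {α : Type*} [Fintype α] (p : α → Prop) :
    Finset.univ.val.countP p = Nat.card {x // p x} := by
  rw [Nat.card_eq_fintype_card, Fintype.card_subtype, Multiset.countP_eq_card_filter]
  rfl

section Designs

variable {K M M' : Type*} [Field K] [AddCommGroup M] [Module K M] [AddCommGroup M'] [Module K M']

structure IsSubspaceDesign (D : Multiset (Submodule K M)) (k lam : ℕ) : Prop where
  finrank_block : ∀ b ∈ D, finrank K b = k
  countP_le : ∀ T : Submodule K M, finrank K T = 2 → D.countP (T ≤ ·) = lam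

theorem countP_le_map_of_injective {f : M →ₗ[K] M'} (hf : Injective f)
    (D : Multiset (Submodule K M)) (T : Submodule K M') :
    (D.map (map f)).countP (T ≤ ·) = if T ≤ range f then D.countP (T.comap f ≤ ·) else 0 := by
  rw [Multiset.countP_map, ← Multiset.countP_eq_card_filter]
  split_ifs with hT
  · simp_rw [le_map_iff_comap_le hf hT]
  · exact Multiset.countP_eq_zero.mpr fun b _ h => hT (h.trans map_le_range)

namespace IsSubspaceDesign

variable {D : Multiset (Submodule K M)} {k lam : ℕ}

theorem finrank_of_mem_map (hD : IsSubspaceDesign D k lam) {f : M →ₗ[K] M'}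
    (hf : Injective f) {c : Submodule K M'} (hc : c ∈ D.map (map f)) : finrank K c = k := by
  obtain ⟨b, hb, rfl⟩ := Multiset.mem_map.mp hc
  rw [finrank_map_of_injective hf, hD.finrank_block b hb]

theorem countP_map (hD : IsSubspaceDesign D k lam) {f : M →ₗ[K] M'} (hf : Injective f)
    {T : Submodule K M'} (hT : finrank K T = 2) :
    (D.map (map f)).countP (T ≤ ·) = if T ≤ range f then lam else 0 := by
  rw [countP_le_map_of_injective hf]
  split_ifs with h
  · exact hD.countP_le _ ((finrank_comap_of_le_range hf h).trans hT)
  · rfl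

theorem map_linearEquiv (hD : IsSubspaceDesign D k lam) (e : M ≃ₗ[K] M') :
    IsSubspaceDesign (D.map (map (e : M →ₗ[K] M'))) k lam where
  finrank_block _ := hD.finrank_of_mem_map e.injective
  countP_le T hT := by rw [hD.countP_map e.injective hT, if_pos (by simp)]

theorem countP_filter_not_le (hD : IsSubspaceDesign D k lam) {U : Submodule K M}
    (hDU : ∀ T ≤ U, finrank K T = 2 → D.countP (fun b => b ≤ U ∧ T ≤ b) = lam)
    {T : Submodule K M} (hT : finrank K T = 2) :
    (D.filter (¬ · ≤ U)).countP (T ≤ ·) = if T ≤ U then 0 else lam := by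
  have h := Multiset.countP_eq_countP_filter_add D (T ≤ ·) (· ≤ U)
  rw [hD.countP_le T hT, Multiset.countP_filter] at h
  split_ifs with hTU
  · simp_rw [and_comm (a := T ≤ _), hDU T hTU hT] at h
    omega
  · rw [Multiset.countP_eq_zero.mpr fun b _ h => hTU (h.1.trans h.2)] at h
    omega

end IsSubspaceDesign

theorem isSubspaceDesign_comap_subtype {D : Multiset (Submodule K M)} {k lam : ℕ}
    (hD : ∀ b ∈ D, finrank K b = k) {U : Submodule K M}
    (hDU : ∀ T ≤ U, finrank K T = 2 → D.countP (fun b => b ≤ U ∧ T ≤ b) = lam) :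
    IsSubspaceDesign ((D.filter (· ≤ U)).map (comap U.subtype)) k lam where
  finrank_block c hc := by
    obtain ⟨b, hb, rfl⟩ := Multiset.mem_map.mp hc
    obtain ⟨hbD, hbU⟩ := Multiset.mem_filter.mp hb
    rw [finrank_comap_of_le_range U.injective_subtype (by rwa [range_subtype]), hD b hbD]
  countP_le T hT := by
    rw [Multiset.countP_map, ← Multiset.countP_eq_card_filter]
    simp_rw [← map_le_iff_le_comap, Multiset.countP_filter, and_comm (a := map _ T ≤ _)]
    exact hDU _ (map_subtype_le U T) ((finrank_map_of_injective U.injective_subtype T).trans hT)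

end Designs

section GDD

variable {K V : Type*} [Field K] [AddCommGroup V] [Module K V]

structure IsSubspaceGDD (Gs : Finset (Submodule K V)) (Bs : Multiset (Submodule K V))
    (m k lam : ℕ) : Prop where
  finrank_group : ∀ G ∈ Gs, finrank K G = m
  existsUnique_group : ∀ x : V, x ≠ 0 → ∃! G, G ∈ Gs ∧ x ∈ G
  finrank_block : ∀ b ∈ Bs, finrank K b = k
  finrank_inf_group_le : ∀ b ∈ Bs, ∀ G ∈ Gs, finrank K ↥(b ⊓ G) ≤ 1
  countP_le : ∀ T : Submodule K V, finrank K T = 2 → (¬ ∃ G ∈ Gs, T ≤ G) → Bs.countP (T ≤ ·) = lam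

namespace IsSubspaceGDD

variable {Gs : Finset (Submodule K V)} {Bs : Multiset (Submodule K V)} {m k lam : ℕ}

theorem countP_groups (hG : IsSubspaceGDD Gs Bs m k lam) {T : Submodule K V} (hT : T ≠ ⊥) :
    Gs.val.countP (T ≤ ·) = if ∃ G ∈ Gs, T ≤ G then 1 else 0 := by
  split_ifs with hex
  · obtain ⟨G, hG', hTG⟩ := hex
    obtain ⟨x, hxT, hx⟩ := (Submodule.ne_bot_iff T).mp hT
    rw [Multiset.countP_eq_card_filter, ← Finset.filter_val, Finset.card_val,
      Finset.card_eq_one]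
    refine ⟨G, Finset.eq_singleton_iff_unique_mem.mpr ⟨Finset.mem_filter.mpr ⟨hG', hTG⟩, ?_⟩⟩
    intro G' hG''
    obtain ⟨hG'', hTG'⟩ := Finset.mem_filter.mp hG''
    exact (hG.existsUnique_group x hx).unique ⟨hG'', hTG' hxT⟩ ⟨hG', hTG hxT⟩
  · exact Multiset.countP_eq_zero.mpr fun G hG' hTG => hex ⟨G, hG', hTG⟩

theorem finrank_eq_two_of_not_le_group [FiniteDimensional K V] (hG : IsSubspaceGDD Gs Bs m k lam)
    {T : Submodule K V} (hT0 : T ≠ ⊥) (hT2 : finrank K T ≤ 2) (hex : ¬ ∃ G ∈ Gs, T ≤ G) :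
    finrank K T = 2 := by
  obtain ⟨x, hxT, hx⟩ := (Submodule.ne_bot_iff T).mp hT0
  obtain ⟨G, ⟨hG', hxG⟩, -⟩ := hG.existsUnique_group x hx
  have hspan : K ∙ x ≠ T := fun h => hex ⟨G, hG', h ▸ (span_singleton_le_iff_mem x G).mpr hxG⟩
  have h1 : finrank K T ≠ 1 := fun h1 =>
    hspan (eq_of_le_of_finrank_eq ((span_singleton_le_iff_mem x T).mpr hxT)
      (by rw [finrank_span_singleton hx, h1]))
  have h0 : finrank K T ≠ 0 := fun h0 => hT0 (finrank_eq_zero.mp h0)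
  omega

theorem countP_eq_zero_of_le_group [FiniteDimensional K V] (hG : IsSubspaceGDD Gs Bs m k lam)
    {T G : Submodule K V} (hT : finrank K T = 2) (hG' : G ∈ Gs) (hTG : T ≤ G) :
    Bs.countP (T ≤ ·) = 0 :=
  Multiset.countP_eq_zero.mpr fun b hb hTb => by
    have := (finrank_mono (le_inf hTb hTG)).trans (hG.finrank_inf_group_le b hb G hG')
    omega

/-- Weighting each group by `c * lam` and each block by `c` (blocks counting only for
2-dimensional `T`), every nonzero subspace of dimension at most `2` has total weight `c * lam`. -/
theorem mul_countP_groups_add [FiniteDimensional K V] (hG : IsSubspaceGDD Gs Bs m k lam)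
    {T : Submodule K V} (hT0 : T ≠ ⊥) (hT2 : finrank K T ≤ 2) (c : ℕ) :
    c * lam * Gs.val.countP (T ≤ ·) + (if finrank K T = 2 then c * Bs.countP (T ≤ ·) else 0) =
      c * lam := by
  rw [hG.countP_groups hT0]
  by_cases hex : ∃ G ∈ Gs, T ≤ G
  · obtain ⟨G, hG', hTG⟩ := hex
    rw [if_pos ⟨G, hG', hTG⟩]
    split_ifs with h2
    · rw [hG.countP_eq_zero_of_le_group h2 hG' hTG]; ring
    · ring
  · rw [if_neg hex, if_pos (hG.finrank_eq_two_of_not_le_group hT0 hT2 hex),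
      hG.countP_le T (hG.finrank_eq_two_of_not_le_group hT0 hT2 hex) hex]
    ring

end IsSubspaceGDD

end GDD

section Construction

variable {K V N Z : Type*} [Field K] [AddCommGroup V] [Module K V] [AddCommGroup N] [Module K N]
  [AddCommGroup Z] [Module K Z]

variable (N) in
noncomputable def liftedBlocks [Finite K] [FiniteDimensional K V] [FiniteDimensional K N]
    (Bs : Multiset (Submodule K V)) : Multiset (Submodule K (V × N)) :=
  Bs.bind fun B =>
    haveI : Finite (B →ₗ[K] N) := Module.finite_of_finite K
    haveI := Fintype.ofFinite (B →ₗ[K] N)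
    Finset.univ.val.map (graphOn B)

theorem finrank_of_mem_liftedBlocks [Finite K] [FiniteDimensional K V] [FiniteDimensional K N]
    {Bs : Multiset (Submodule K V)} {k : ℕ} (hBs : ∀ B ∈ Bs, finrank K B = k)
    {c : Submodule K (V × N)} (hc : c ∈ liftedBlocks N Bs) : finrank K c = k := by
  obtain ⟨B, hB, hc⟩ := Multiset.mem_bind.mp hc
  obtain ⟨f, -, rfl⟩ := Multiset.mem_map.mp hc
  rw [finrank_graphOn, hBs B hB]

theorem countP_le_liftedBlocks [Finite K] [FiniteDimensional K V] [FiniteDimensional K N]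
    {Bs : Multiset (Submodule K V)} {k : ℕ} (hBs : ∀ B ∈ Bs, finrank K B = k)
    (T : Submodule K (V × N)) :
    (liftedBlocks N Bs).countP (T ≤ ·) =
      if Disjoint T (ker (fst K V N)) then
        Nat.card K ^ (finrank K N * (k - finrank K T)) * Bs.countP (T.map (fst K V N) ≤ ·)
      else 0 := by
  split_ifs with hT
  · refine Multiset.countP_bind_eq_mul fun B hB => ?_
    have : Finite (B →ₗ[K] N) := Module.finite_of_finite K
    let := Fintype.ofFinite (B →ₗ[K] N)
    rw [Multiset.countP_map, ← Multiset.countP_eq_card_filter, Finset.countP_univ_val,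
      natCard_le_graphOn, hBs B hB, mul_comm (finrank K N)]
    simp [hT]
  · refine Multiset.countP_eq_zero.mpr fun c hc hTc => hT ?_
    obtain ⟨B, -, hc⟩ := Multiset.mem_bind.mp hc
    obtain ⟨f, -, rfl⟩ := Multiset.mem_map.mp hc
    exact (disjoint_graphOn_ker_fst B f).mono_left hTc

theorem exists_injective_range_eq_prod [FiniteDimensional K V] [FiniteDimensional K N]
    [FiniteDimensional K Z] {G : Submodule K V} {U : Submodule K Z}
    (hZ : finrank K Z = finrank K G + finrank K N) (hU : finrank K U = finrank K N) :
    ∃ φ : Z →ₗ[K] V × N,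
      Injective φ ∧ range φ = G.prod ⊤ ∧ U.map φ = ker (fst K V N) := by
  obtain ⟨C, hC⟩ := U.exists_isCompl
  have hCG : finrank K C = finrank K G := by
    have := finrank_add_eq_of_isCompl hC
    omega
  obtain ⟨eC⟩ := FiniteDimensional.nonempty_linearEquiv_of_finrank_eq hCG
  obtain ⟨eU⟩ := FiniteDimensional.nonempty_linearEquiv_of_finrank_eq hU
  let e := (prodEquivOfIsCompl C U hC.symm).symm
  let ψ := (G.subtype ∘ₗ (eC : C →ₗ[K] G)).prodMap (eU : U →ₗ[K] N)
  have hψ : Injective ψ := by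
    rw [coe_prodMap]
    exact (G.injective_subtype.comp eC.injective).prodMap eU.injective
  have hφ : Injective (ψ ∘ₗ (e : Z →ₗ[K] C × U)) := hψ.comp e.injective
  refine ⟨ψ ∘ₗ e, hφ, ?_, ?_⟩
  · rw [range_comp_of_range_eq_top _ e.range, range_prodMap, range_comp_of_range_eq_top _ eC.range,
      range_subtype, eU.range]
  · refine eq_of_le_of_finrank_eq ?_ ?_
    · rintro _ ⟨u, hu, rfl⟩
      simpa [mem_ker, e, ψ] using hu
    · rw [finrank_map_of_injective hφ, hU, ker_fst,
        finrank_range_of_inj inr_injective]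

noncomputable def residualCopies (Gs : Finset (Submodule K V)) (φ : Submodule K V → Z →ₗ[K] V × N)
    (Ds : Multiset (Submodule K Z)) (U : Submodule K Z) : Multiset (Submodule K (V × N)) :=
  Gs.val.bind fun G => (Ds.filter (¬ · ≤ U)).map (map (φ G))

section residualCopies

variable {Gs : Finset (Submodule K V)} {φ : Submodule K V → Z →ₗ[K] V × N}
  {Ds : Multiset (Submodule K Z)} {U : Submodule K Z} {k lam : ℕ}

theorem finrank_of_mem_residualCopies (hφ : ∀ G ∈ Gs, Injective (φ G))
    (hD : ∀ b ∈ Ds, finrank K b = k) {c : Submodule K (V × N)}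
    (hc : c ∈ residualCopies Gs φ Ds U) : finrank K c = k := by
  obtain ⟨G, hG, hc⟩ := Multiset.mem_bind.mp hc
  obtain ⟨b, hb, rfl⟩ := Multiset.mem_map.mp hc
  rw [finrank_map_of_injective (hφ G hG), hD b (Multiset.mem_of_mem_filter hb)]

theorem countP_le_residualCopies
    (hφ : ∀ G ∈ Gs, Injective (φ G) ∧ range (φ G) = G.prod ⊤ ∧ U.map (φ G) = ker (fst K V N))
    (hD : IsSubspaceDesign Ds k lam)
    (hDU : ∀ T ≤ U, finrank K T = 2 → Ds.countP (fun b => b ≤ U ∧ T ≤ b) = lam)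
    {T : Submodule K (V × N)} (hT : finrank K T = 2) :
    (residualCopies Gs φ Ds U).countP (T ≤ ·) =
      if T ≤ ker (fst K V N) then 0 else lam * Gs.val.countP (T.map (fst K V N) ≤ ·) := by
  have hcopy : ∀ G ∈ Gs, ((Ds.filter (¬ · ≤ U)).map (map (φ G))).countP (T ≤ ·) =
      if T.map (fst K V N) ≤ G ∧ ¬ T ≤ ker (fst K V N) then lam else 0 := by
    intro G hG
    obtain ⟨hinj, hrange, hU⟩ := hφ G hG
    rw [countP_le_map_of_injective hinj, hrange, ← comap_fst, ← map_le_iff_le_comap]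
    by_cases hTG : T.map (fst K V N) ≤ G
    · have hTφ : T ≤ range (φ G) := by rwa [hrange, ← comap_fst, ← map_le_iff_le_comap]
      rw [if_pos hTG, hD.countP_filter_not_le hDU ((finrank_comap_of_le_range hinj hTφ).trans hT),
        ← le_map_iff_comap_le hinj hTφ, hU]
      by_cases h0 : T ≤ ker (fst K V N) <;> simp [h0, hTG]
    · simp [hTG]
  rw [residualCopies, Multiset.countP_bind_eq_mul hcopy]
  split_ifs with h0 <;> simp [h0]

end residualCopies

theorem IsSubspaceGDD.exists_isSubspaceDesign_prod [Finite K] [FiniteDimensional K V]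
    [FiniteDimensional K N] [FiniteDimensional K Z] {Gs : Finset (Submodule K V)}
    {Bs : Multiset (Submodule K V)} {m k lam : ℕ} (hG : IsSubspaceGDD Gs Bs m k lam)
    {Ds : Multiset (Submodule K Z)} {U : Submodule K Z} (hZ : finrank K Z = m + finrank K N)
    (hU : finrank K U = finrank K N)
    (hD : IsSubspaceDesign Ds k (Nat.card K ^ (finrank K N * (k - 2)) * lam))
    (hDU : ∀ T ≤ U, finrank K T = 2 →
      Ds.countP (fun b => b ≤ U ∧ T ≤ b) = Nat.card K ^ (finrank K N * (k - 2)) * lam) :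
    ∃ Cs : Multiset (Submodule K (V × N)),
      IsSubspaceDesign Cs k (Nat.card K ^ (finrank K N * (k - 2)) * lam) := by
  choose! φ hφ using fun G (hG' : G ∈ Gs) =>
    exists_injective_range_eq_prod (N := N) (hZ.trans (by rw [hG.finrank_group G hG'])) hU
  obtain ⟨eU⟩ := FiniteDimensional.nonempty_linearEquiv_of_finrank_eq hU
  let j : U →ₗ[K] V × N := inr K V N ∘ₗ eU
  have hj : Injective j := inr_injective.comp eU.injective
  have hjr : range j = ker (fst K V N) := by rw [range_comp_of_range_eq_top _ eU.range, ker_fst]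
  have hDU' := isSubspaceDesign_comap_subtype hD.finrank_block hDU
  refine ⟨residualCopies Gs φ Ds U + ((Ds.filter (· ≤ U)).map (comap U.subtype)).map (map j) +
    liftedBlocks N Bs, fun c hc => ?_, fun T hT => ?_⟩
  · rcases Multiset.mem_add.mp hc with hc | hc
    · rcases Multiset.mem_add.mp hc with hc | hc
      · exact finrank_of_mem_residualCopies (fun G hG' => (hφ G hG').1) hD.finrank_block hc
      · exact hDU'.finrank_of_mem_map hj hc
    · exact finrank_of_mem_liftedBlocks hG.finrank_block hc
  rw [Multiset.countP_add, Multiset.countP_add, countP_le_residualCopies hφ hD hDU hT,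
    hDU'.countP_map hj hT, hjr, countP_le_liftedBlocks hG.finrank_block, hT]
  by_cases h0 : T ≤ ker (fst K V N)
  · have hT0 : T ≠ ⊥ := by rintro rfl; simp at hT
    rw [if_pos h0, if_pos h0, if_neg fun h => hT0 (h.eq_bot_of_le h0), zero_add, add_zero]
  · have hTv0 : T.map (fst K V N) ≠ ⊥ := fun h => h0 (map_le_iff_le_comap.mp h.le)
    have hdisj : Disjoint T (ker (fst K V N)) ↔ finrank K (T.map (fst K V N)) = 2 :=
      ⟨fun h => (finrank_map_of_disjoint_ker h).trans hT,
        fun h => disjoint_ker_of_finrank_le _ (by rw [h, hT])⟩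
    rw [if_neg h0, if_neg h0, add_zero, if_congr hdisj rfl rfl]
    exact hG.mul_countP_groups_add hTv0 (hT ▸ finrank_map_le _ T) _

end Construction

open scoped Classical in
theorem stmt_18 (q v m n k lam : ℕ)
    (K : Type*) [Field K] [Fintype K] (hq : Fintype.card K = q)
    -- the GDD (V, 𝒢, 𝔅)
    (V : Type*) [AddCommGroup V] [Module K V] [FiniteDimensional K V]
    (hv : Module.finrank K V = v)
    (Gs : Finset (Submodule K V))
    (hGdim : ∀ G ∈ Gs, Module.finrank K ↥G = m)
    (hGpart : ∀ x : V, x ≠ 0 → ∃! G, G ∈ Gs ∧ x ∈ G)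
    (Bs : Multiset (Submodule K V))
    (hBdim : ∀ b ∈ Bs, Module.finrank K ↥b = k)
    (hBG : ∀ b ∈ Bs, ∀ G ∈ Gs, Module.finrank K ↥(b ⊓ G) ≤ 1)
    (hGDD : ∀ T : Submodule K V, Module.finrank K ↥T = 2 → (¬ ∃ G ∈ Gs, T ≤ G) →
      Multiset.countP (fun b => T ≤ b) Bs = lam)
    -- the design (Z, 𝒟)
    (Z : Type*) [AddCommGroup Z] [Module K Z] [FiniteDimensional K Z]
    (hz : Module.finrank K Z = m + n)
    (Ds : Multiset (Submodule K Z))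
    (hDdim : ∀ b ∈ Ds, Module.finrank K ↥b = k)
    (hDdes : ∀ T : Submodule K Z, Module.finrank K ↥T = 2 →
      Multiset.countP (fun b => T ≤ b) Ds = q ^ (n * (k - 2)) * lam)
    -- the subdesign on U
    (U : Submodule K Z) (hU : Module.finrank K ↥U = n)
    (hDU : ∀ T : Submodule K Z, T ≤ U → Module.finrank K ↥T = 2 →
      Multiset.countP (fun b => b ≤ U ∧ T ≤ b) Ds = q ^ (n * (k - 2)) * lam) :
    ∃ Cs : Multiset (Submodule K (Fin (v + n) → K)),
      (∀ c ∈ Cs, Module.finrank K ↥c = k) ∧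
      (∀ T : Submodule K (Fin (v + n) → K), Module.finrank K ↥T = 2 →
        Multiset.countP (fun c => T ≤ c) Cs = q ^ (n * (k - 2)) * lam) := by
  have hN : finrank K (Fin n → K) = n := finrank_fin_fun K
  have hlam : Nat.card K ^ (finrank K (Fin n → K) * (k - 2)) * lam = q ^ (n * (k - 2)) * lam := by
    rw [hN, Nat.card_eq_fintype_card, hq]
  rw [← hlam] at hDdes hDU ⊢
  have hG : IsSubspaceGDD Gs Bs m k lam := ⟨hGdim, hGpart, hBdim, hBG, hGDD⟩
  obtain ⟨Cs, hCs⟩ := hG.exists_isSubspaceDesign_prod (N := Fin n → K) (hz.trans (by rw [hN]))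
    (hU.trans hN.symm) ⟨hDdim, hDdes⟩ hDU
  obtain ⟨e⟩ := FiniteDimensional.nonempty_linearEquiv_of_finrank_eq (R := K)
    (M := V × (Fin n → K)) (M' := Fin (v + n) → K) (by rw [finrank_prod, hv, hN, finrank_fin_fun])
  exact ⟨_, (hCs.map_linearEquiv e).finrank_block, (hCs.map_linearEquiv e).countP_le⟩
end
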